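/- Let A ∈ sl(n,ℍ) and let B = diag(a₁+i b₁, …, aₙ+i bₙ) ∈ sl(n,ℍ) be diagonal with aᵣ, bᵣ ∈ ℝ and a₁ > a₂ ≥ ⋯ ≥ a_{n−1} > aₙ. Let q ∈ ℍ be the (n,1) entry of A and let Y = q·E_{n1} be the matrix whose (n,1) entry is q and all other entries are 0. Then there exists a sequence t_k → −∞ of real numbers such that e^{t_k(a₁−aₙ)} · exp(t_k B) · A · exp(−t_k B) converges to Y in the space of n×n quaternionic matrices. -/

import Mathlib

open Quaternion Matrix

noncomputable section

/-- `n×n` quaternionic matrices. -/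
abbrev Mq (n : ℕ) := Matrix (Fin n) (Fin n) ℍ[ℝ]

/-- `sl(n, ℍ)`: matrices whose trace has zero real part. -/
def slSet (n : ℕ) : Set (Mq n) := {X | (Matrix.trace X).re = 0}

/-- matrix exponential of quaternionic matrices -/
noncomputable def mexp {n : ℕ} (X : Mq n) : Mq n := NormedSpace.exp X

open Filter

/-!
Conjugation by `exp (t B)` multiplies the `(r, s)` entry of `A` by `e^{t (a_r - a_s)}` and, on
either side, by the unit quaternions `exp (t b_r i)` and `exp (-t b_s i)`. After rescaling by
`e^{t (a₁ - aₙ)}`, every entry other than `(n, 1)` carries a factor `e^{t D}` with `D > 0` (this is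
where the strict gaps `a₁ > a₂` and `a_{n-1} > aₙ` enter), which vanishes as `t → -∞`. The
`(n, 1)` entry is `exp (t bₙ i) q exp (-t b₁ i)`; recurrence of the powers of an element of the
compact group `S³ × S³` gives `t_k → -∞` along which both unit factors tend to `1`.
-/

open NormedSpace Topology

-- Mathlib's lemmas on `exp` need a `ℚ`-normed algebra; Mathlib only provides this one locally.
noncomputable instance : NormedAlgebra ℚ ℍ[ℝ] := .restrictScalars ℚ ℝ ℍ[ℝ]

theorem exists_tendsto_atTop_pow_tendsto_one {G : Type*} [Group G] [TopologicalSpace G]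
    [IsTopologicalGroup G] [SeqCompactSpace G] (g : G) :
    ∃ m : ℕ → ℕ, Tendsto m atTop atTop ∧ Tendsto (fun k => g ^ m k) atTop (𝓝 1) := by
  obtain ⟨L, φ, hφ, hL⟩ := SeqCompactSpace.tendsto_subseq fun k => g ^ k
  have hgap (k : ℕ) : k + 1 + φ k ≤ φ (2 * k + 1) := by
    simpa [two_mul, add_right_comm] using hφ.add_le_nat (k + 1) k
  have hodd : Tendsto (fun k : ℕ => 2 * k + 1) atTop atTop :=
    tendsto_atTop_mono (fun k => show k ≤ 2 * k + 1 by omega) tendsto_id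
  refine ⟨fun k => φ (2 * k + 1) - φ k, ?_, ?_⟩
  · exact tendsto_atTop_mono (fun k => by have := hgap k; omega) (tendsto_add_atTop_nat 1)
  · have hpow (k : ℕ) : g ^ (φ (2 * k + 1) - φ k) = g ^ φ (2 * k + 1) * (g ^ φ k)⁻¹ :=
      pow_sub g (hφ.monotone (by omega))
    simpa only [hpow, mul_inv_cancel, Function.comp_def] using (hL.comp hodd).mul hL.inv

theorem Quaternion.exp_smul_eq (t : ℝ) (x : ℍ[ℝ]) :
    exp (t • x) = Real.exp (t * x.re) • exp (t • x.im) := by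
  simp [exp_eq (t • x), exp_eq (t • x.im), Real.exp_eq_exp_ℝ]

theorem Quaternion.exists_tendsto_atBot_exp_smul_im_tendsto_one (v w : ℍ[ℝ]) :
    ∃ t : ℕ → ℝ, Tendsto t atTop atBot ∧ Tendsto (fun k => exp (t k • v.im)) atTop (𝓝 1) ∧
      Tendsto (fun k => exp (t k • w.im)) atTop (𝓝 1) := by
  let u (x : ℍ[ℝ]) : Metric.sphere (0 : ℍ[ℝ]) 1 := ⟨exp (-x.im), by simp⟩
  obtain ⟨m, hm, hpow⟩ := exists_tendsto_atTop_pow_tendsto_one (u v, u w)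
  have hu (x : ℍ[ℝ]) (k : ℕ) : exp ((-(m k : ℝ)) • x.im) = ((u x ^ m k : _) : ℍ[ℝ]) := by
    rw [Metric.unitSphere.coe_pow, ← NormedSpace.exp_nsmul, smul_neg, ← Nat.cast_smul_eq_nsmul ℝ,
      neg_smul]
  refine ⟨fun k => -(m k : ℝ), tendsto_neg_atTop_atBot.comp
    (tendsto_natCast_atTop_atTop.comp hm), ?_, ?_⟩
  · simp only [hu]
    exact (continuous_subtype_val.tendsto 1).comp ((continuous_fst.tendsto 1).comp hpow)
  · simp only [hu]
    exact (continuous_subtype_val.tendsto 1).comp ((continuous_snd.tendsto 1).comp hpow)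

theorem mexp_smul_diagonal {n : ℕ} (t : ℝ) (d : Fin n → ℍ[ℝ]) :
    mexp (t • diagonal d) = diagonal fun r => exp (t • d r) := by
  rw [mexp, ← diagonal_smul, Matrix.exp_diagonal, Pi.exp_def]
  rfl

theorem mexp_conj_diagonal_apply {n : ℕ} (t : ℝ) (d : Fin n → ℍ[ℝ]) (A : Mq n) (r s : Fin n) :
    (mexp (t • diagonal d) * A * mexp (-(t • diagonal d))) r s =
      Real.exp (t * ((d r).re - (d s).re)) •
        (exp (t • (d r).im) * A r s * exp ((-t) • (d s).im)) := by
  rw [← neg_smul, mexp_smul_diagonal, mexp_smul_diagonal, mul_diagonal, diagonal_mul,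
    Quaternion.exp_smul_eq t (d r), Quaternion.exp_smul_eq (-t) (d s)]
  simp only [smul_mul_assoc, mul_smul_comm, smul_smul, ← Real.exp_add]
  ring_nf

theorem tendsto_exp_smul_im_mul_mul_exp_neg_smul_im {t : ℕ → ℝ} {v w : ℍ[ℝ]}
    (hv : Tendsto (fun k => exp (t k • v.im)) atTop (𝓝 1))
    (hw : Tendsto (fun k => exp (t k • w.im)) atTop (𝓝 1)) (q : ℍ[ℝ]) :
    Tendsto (fun k => exp (t k • v.im) * q * exp ((-t k) • w.im)) atTop (𝓝 q) := by
  simp only [neg_smul, NormedSpace.exp_neg]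
  simpa using (hv.mul_const q).mul (hw.inv₀ one_ne_zero)

theorem tendsto_exp_mul_smul_nhds_zero {t : ℕ → ℝ} (ht : Tendsto t atTop atBot) {D : ℝ}
    (hD : 0 < D) (v w q : ℍ[ℝ]) :
    Tendsto (fun k => Real.exp (t k * D) • (exp (t k • v.im) * q * exp ((-t k) • w.im)))
      atTop (𝓝 0) := by
  have hexp : Tendsto (fun k => Real.exp (t k * D)) atTop (𝓝 0) :=
    Real.tendsto_exp_atBot.comp (ht.atBot_mul_const hD)
  rw [tendsto_zero_iff_norm_tendsto_zero]
  simpa [norm_smul] using hexp.mul_const ‖q‖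

theorem add_sub_pos_of_antitone {n : ℕ} (hn : 1 < n) {a : Fin n → ℝ} (ha : Antitone a)
    (ha1 : a ⟨1, by omega⟩ < a ⟨0, by omega⟩) (han : a ⟨n - 1, by omega⟩ < a ⟨n - 2, by omega⟩)
    {r s : Fin n} (hrs : ¬(r = ⟨n - 1, by omega⟩ ∧ s = ⟨0, by omega⟩)) :
    0 < a ⟨0, by omega⟩ - a ⟨n - 1, by omega⟩ + (a r - a s) := by
  have hr : a ⟨n - 1, by omega⟩ ≤ a r := ha (Fin.le_def.2 (Nat.le_sub_one_of_lt r.isLt))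
  have hs : a s ≤ a ⟨0, by omega⟩ := ha (Fin.le_def.2 (Nat.zero_le _))
  rcases not_and_or.1 hrs with hr_ne | hs_ne
  · have hr_val : r.val ≠ n - 1 := fun h => hr_ne (Fin.ext h)
    have : a ⟨n - 2, by omega⟩ ≤ a r := ha (show r.val ≤ n - 2 by have := r.isLt; omega)
    linarith
  · have hs_val : s.val ≠ 0 := fun h => hs_ne (Fin.ext h)
    have : a s ≤ a ⟨1, by omega⟩ := ha (show 1 ≤ s.val by omega)
    linarith

/-- if `B = diag (a₁ + i b₁, …, aₙ + i bₙ)` with `a₁ > a₂ ≥ ⋯ ≥ a_{n-1} > aₙ`,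
then along a suitable sequence `t_k → -∞` the matrices
`e^{t_k (a₁ - aₙ)} exp(t_k B) A exp(-t_k B)` converge to `Y = q E_{n1}`, where `q` is the
`(n,1)` entry of `A`. -/
theorem stmt12 (n : ℕ) (hn : 2 ≤ n) (A B : Mq n)
    (a b : Fin n → ℝ)
    (hBdiag : B = Matrix.diagonal fun r => (⟨a r, b r, 0, 0⟩ : ℍ[ℝ]))
    (ha1 : a ⟨0, by omega⟩ > a ⟨1, by omega⟩)
    (hamono : ∀ r s : Fin n, r ≤ s → a s ≤ a r)
    (han : a ⟨n - 2, by omega⟩ > a ⟨n - 1, by omega⟩) :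
    ∃ t : ℕ → ℝ, Tendsto t atTop atBot ∧
      Tendsto
        (fun k => Real.exp ((t k) * (a ⟨0, by omega⟩ - a ⟨n - 1, by omega⟩)) •
          (mexp ((t k) • B) * A * mexp (-((t k) • B))))
        atTop
        (nhds (Matrix.single ⟨n - 1, by omega⟩ ⟨0, by omega⟩
          (A ⟨n - 1, by omega⟩ ⟨0, by omega⟩))) := by
  let d : Fin n → ℍ[ℝ] := fun r => ⟨a r, b r, 0, 0⟩
  have hB : B = diagonal d := hBdiag
  set first : Fin n := ⟨0, by omega⟩
  set last : Fin n := ⟨n - 1, by omega⟩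
  obtain ⟨t, ht, hlast, hfirst⟩ :=
    Quaternion.exists_tendsto_atBot_exp_smul_im_tendsto_one (d last) (d first)
  refine ⟨t, ht, tendsto_pi_nhds.2 fun r => tendsto_pi_nhds.2 fun s => ?_⟩
  have hentry (k : ℕ) : (Real.exp (t k * (a first - a last)) •
      (mexp (t k • B) * A * mexp (-(t k • B)))) r s =
      Real.exp (t k * (a first - a last + (a r - a s))) •
        (exp (t k • (d r).im) * A r s * exp ((-t k) • (d s).im)) := by
    rw [Matrix.smul_apply, hB, mexp_conj_diagonal_apply, smul_smul, ← Real.exp_add, mul_add]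
  simp only [hentry]
  by_cases hrs : r = last ∧ s = first
  · obtain ⟨rfl, rfl⟩ := hrs
    simpa using tendsto_exp_smul_im_mul_mul_exp_neg_smul_im hlast hfirst (A _ _)
  · convert tendsto_exp_mul_smul_nhds_zero ht (add_sub_pos_of_antitone hn hamono ha1 han hrs)
      (d r) (d s) (A r s) using 2
    exact single_apply_of_ne _ _ _ _ _ fun h => hrs ⟨h.1.symm, h.2.symm⟩
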